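/- Let V be holomorphic on an open subset of ℂ containing the real segment [−1,1], let −1 < β < β′ < 1 and δ₁ ∈ ℝ. There exist a₀ > 0 and C > 0 such that for every real a ≥ a₀ there is a unique b ∈ ℝ with Im ∫_{β}^{β′} √((a + i·b) − V(x) − i·δ₁) dx = 0, and this unique b satisfies |b − ( (Im ∫_{β}^{β′} V(x) dx)/(β′−β) + δ₁ )| ≤ C/a, where √ denotes the principal branch of the complex square root. -/

import Mathlib

/-!
For large `a` the points `z = a + ib - w(x)` lie in the right half-plane, where `Im √z` is
strictly increasing in `Im z` at fixed `Re z`; hence `b ↦ Im ∫ √(a + ib - w)` is continuous and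
strictly increasing. Linearising, `Im √z = Im z / (2√a) + O(a^{-3/2})` uniformly, so the
integral is `(β' - β)(b - m) / (2√a) + O(a^{-3/2})` with `m` the mean of `Im w` over `[β, β']`.
It therefore changes sign on `[m - C/a, m + C/a]`, which traps the unique root. The theorem is
the case `w = V + iδ₁`, extended constantly off `[β, β']` to a bounded continuous function on `ℝ`.
-/

namespace Complex

lemma cpow_one_half_sq (z : ℂ) : (z ^ (1 / 2 : ℂ)) ^ 2 = z := by
  rw [one_div]
  exact cpow_ofNat_inv_pow z 2

lemma re_cpow_one_half_pos {z : ℂ} (hz : 0 < z.re) : 0 < (z ^ (1 / 2 : ℂ)).re := by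
  rw [one_div, cpow_inv_two_re]
  exact Real.sqrt_pos.2 (by linarith [re_le_norm z])

lemma im_lt_im_of_sq_re_eq_of_sq_im_lt {s t : ℂ} (hre : 0 < s.re + t.re)
    (hsq_re : (s ^ 2).re = (t ^ 2).re) (hsq_im : (s ^ 2).im < (t ^ 2).im) : s.im < t.im := by
  simp only [sq, mul_re, mul_im] at hsq_re hsq_im
  have key : (t.im - s.im) * ((s.re + t.re) ^ 2 + (s.im + t.im) ^ 2)
      = ((t.re * t.im + t.im * t.re) - (s.re * s.im + s.im * s.re)) * (s.re + t.re) := by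
    linear_combination (s.im + t.im) * hsq_re
  have hpos : 0 < (t.im - s.im) * ((s.re + t.re) ^ 2 + (s.im + t.im) ^ 2) :=
    key ▸ mul_pos (by linarith) hre
  exact sub_pos.1 ((mul_pos_iff_of_pos_right (by positivity)).1 hpos)

/-- With `s = p + iq` one has `Im s² = 2pq`, so the error is `q (√a - p) / √a`, and both `q` and
`√a - p` are `O(1/√a)`. -/
lemma abs_im_sub_sq_im_div_le {s : ℂ} {a M B : ℝ} (hs : 0 < s.re) (ha : 1 ≤ a) (hB : 1 ≤ B)
    (hre : a / 2 ≤ (s ^ 2).re) (hreM : |(s ^ 2).re - a| ≤ M) (him : |(s ^ 2).im| ≤ B) :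
    |s.im - (s ^ 2).im / (2 * √a)| ≤ B * (M + B ^ 2) / (a * √a) := by
  set p := s.re
  set q := s.im
  set r := √a
  have hr_sq : r ^ 2 = a := Real.sq_sqrt (by linarith)
  have hr : 1 ≤ r := Real.one_le_sqrt.2 ha
  have hsq_re : (s ^ 2).re = p ^ 2 - q ^ 2 := by simp only [sq, mul_re]; ring
  have hsq_im : (s ^ 2).im = 2 * p * q := by simp only [sq, mul_im]; ring
  have hr_le : r ≤ 2 * p := by nlinarith [sq_nonneg q]
  have hq : |q| * r ≤ B := by
    have : 2 * p * |q| = |(s ^ 2).im| := by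
      rw [hsq_im, abs_mul, abs_of_pos (by linarith : (0 : ℝ) < 2 * p)]
    nlinarith [abs_nonneg q]
  have hq_sq : q ^ 2 ≤ B ^ 2 := by
    rw [← sq_abs]; exact pow_le_pow_left₀ (abs_nonneg q) (by nlinarith [abs_nonneg q]) 2
  have hrp : |r - p| * r ≤ M + B ^ 2 := by
    have hfac : |r - p| * (r + p) = |(a - (s ^ 2).re) - q ^ 2| := by
      rw [← abs_of_pos (by linarith : 0 < r + p), ← abs_mul, hsq_re, ← hr_sq]; ring_nf
    have : |(a - (s ^ 2).re) - q ^ 2| ≤ M + B ^ 2 := by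
      calc |(a - (s ^ 2).re) - q ^ 2| ≤ |a - (s ^ 2).re| + |q ^ 2| := abs_sub _ _
        _ ≤ M + B ^ 2 := by rw [abs_sub_comm, abs_of_nonneg (sq_nonneg q)]; linarith
    nlinarith [abs_nonneg (r - p)]
  have hkey : q - (s ^ 2).im / (2 * r) = q * (r - p) / r := by
    rw [hsq_im]; field_simp
  rw [hkey, abs_div, abs_mul, abs_of_pos (by linarith : 0 < r),
    div_le_div_iff₀ (by linarith) (by positivity), ← hr_sq]
  calc |q| * |r - p| * (r ^ 2 * r) = (|q| * r) * (|r - p| * r) * r := by ring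
    _ ≤ B * (M + B ^ 2) * r := by gcongr

lemma im_cpow_one_half_lt {z w : ℂ} (hre : z.re = w.re) (hz : 0 < z.re) (him : z.im < w.im) :
    (z ^ (1 / 2 : ℂ)).im < (w ^ (1 / 2 : ℂ)).im :=
  im_lt_im_of_sq_re_eq_of_sq_im_lt
    (add_pos (re_cpow_one_half_pos hz) (re_cpow_one_half_pos (hre ▸ hz)))
    (by rw [cpow_one_half_sq, cpow_one_half_sq, hre]) (by rwa [cpow_one_half_sq, cpow_one_half_sq])

lemma abs_im_cpow_one_half_sub_le {z : ℂ} {a M B : ℝ} (ha : 1 ≤ a) (hB : 1 ≤ B)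
    (hre : a / 2 ≤ z.re) (hreM : |z.re - a| ≤ M) (him : |z.im| ≤ B) :
    |(z ^ (1 / 2 : ℂ)).im - z.im / (2 * √a)| ≤ B * (M + B ^ 2) / (a * √a) := by
  have hs := abs_im_sub_sq_im_div_le (s := z ^ (1 / 2 : ℂ)) (M := M)
    (re_cpow_one_half_pos (by linarith)) ha hB
  rw [cpow_one_half_sq] at hs
  exact hs hre hreM him

end Complex

open Complex Set Bornology

noncomputable def imSqrtIntegral (w : ℝ → ℂ) (β β' a b : ℝ) : ℝ :=
  (∫ x in β..β', ((a : ℂ) + b * I - w x) ^ (1 / 2 : ℂ)).im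

section imSqrtIntegral

variable {w : ℝ → ℂ} {β β' M a : ℝ}

lemma continuous_shifted_cpow_one_half (hw : Continuous w) (hM : ∀ x, ‖w x‖ ≤ M) (ha : M < a) :
    Continuous fun p : ℝ × ℝ => ((a : ℂ) + p.1 * I - w p.2) ^ (1 / 2 : ℂ) := by
  refine Continuous.cpow (by fun_prop) continuous_const fun p => Or.inl ?_
  simp only [sub_re, add_re, ofReal_re, mul_re, ofReal_im, I_re, I_im]
  linarith [re_le_norm (w p.2), hM p.2]

lemma continuous_shifted_cpow_one_half_right (hw : Continuous w) (hM : ∀ x, ‖w x‖ ≤ M)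
    (ha : M < a) (b : ℝ) : Continuous fun x => ((a : ℂ) + b * I - w x) ^ (1 / 2 : ℂ) :=
  (continuous_shifted_cpow_one_half hw hM ha).comp (Continuous.prodMk_right b)

lemma continuous_imSqrtIntegral (hw : Continuous w) (hM : ∀ x, ‖w x‖ ≤ M) (ha : M < a) :
    Continuous (imSqrtIntegral w β β' a) :=
  continuous_im.comp <| intervalIntegral.continuous_parametric_intervalIntegral_of_continuous'
    (continuous_shifted_cpow_one_half hw hM ha) β β'

lemma imSqrtIntegral_eq_integral_im (hw : Continuous w) (hM : ∀ x, ‖w x‖ ≤ M) (ha : M < a)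
    (b : ℝ) : imSqrtIntegral w β β' a b
      = ∫ x in β..β', (((a : ℂ) + b * I - w x) ^ (1 / 2 : ℂ)).im :=
  (imCLM.intervalIntegral_comp_comm
    ((continuous_shifted_cpow_one_half_right hw hM ha b).intervalIntegrable β β')).symm

lemma strictMono_imSqrtIntegral (hw : Continuous w) (hM : ∀ x, ‖w x‖ ≤ M) (ha : M < a)
    (h : β < β') : StrictMono (imSqrtIntegral w β β' a) := by
  intro b₁ b₂ hb
  have hcont (b : ℝ) := continuous_im.comp (continuous_shifted_cpow_one_half_right hw hM ha b)
  have hlt (x : ℝ) : (((a : ℂ) + b₁ * I - w x) ^ (1 / 2 : ℂ)).im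
      < (((a : ℂ) + b₂ * I - w x) ^ (1 / 2 : ℂ)).im := by
    apply im_cpow_one_half_lt <;> simp only [sub_re, add_re, ofReal_re, mul_re, ofReal_im, I_re,
      I_im, sub_im, add_im, mul_im]
    · ring
    · linarith [re_le_norm (w x), hM x]
    · linarith
  rw [imSqrtIntegral_eq_integral_im hw hM ha, imSqrtIntegral_eq_integral_im hw hM ha]
  exact intervalIntegral.integral_lt_integral_of_continuousOn_of_le_of_exists_lt h
    (hcont b₁).continuousOn (hcont b₂).continuousOn (fun x _ => (hlt x).le)
    ⟨β, left_mem_Icc.2 h.le, hlt β⟩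

lemma abs_imSqrtIntegral_sub_le {B b : ℝ} (hw : Continuous w) (hM : ∀ x, ‖w x‖ ≤ M)
    (ha : 1 ≤ a) (haM : 2 * M ≤ a) (hB : 1 ≤ B) (hbB : ∀ x, |b - (w x).im| ≤ B) (h : β < β') :
    |imSqrtIntegral w β β' a b - (β' - β) / (2 * √a) * (b - (∫ x in β..β', w x).im / (β' - β))|
      ≤ (β' - β) / (2 * √a) * (2 * (B * (M + B ^ 2)) / a) := by
  have hMa : M < a := by linarith [(norm_nonneg (w 0)).trans (hM 0)]
  have hint_im : ∫ x in β..β', (w x).im = (∫ x in β..β', w x).im :=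
    imCLM.intervalIntegral_comp_comm (hw.intervalIntegrable β β')
  have hlin : (β' - β) / (2 * √a) * (b - (∫ x in β..β', w x).im / (β' - β))
      = ∫ x in β..β', ((a : ℂ) + b * I - w x).im / (2 * √a) := by
    simp only [sub_im, add_im, ofReal_im, mul_im, ofReal_re, I_re, I_im, mul_one, mul_zero,
      zero_add, add_zero, intervalIntegral.integral_div]
    rw [intervalIntegral.integral_sub intervalIntegrable_const
      ((by fun_prop : Continuous fun x => (w x).im).intervalIntegrable β β'),
      intervalIntegral.integral_const, hint_im, smul_eq_mul]
    field_simp [sub_ne_zero.2 h.ne']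
  have hcont : Continuous fun x => (((a : ℂ) + b * I - w x) ^ (1 / 2 : ℂ)).im :=
    continuous_im.comp (continuous_shifted_cpow_one_half_right hw hM hMa b)
  rw [imSqrtIntegral_eq_integral_im hw hM hMa, hlin, ← intervalIntegral.integral_sub
    (hcont.intervalIntegrable β β') ((by fun_prop : Continuous fun x =>
      ((a : ℂ) + b * I - w x).im / (2 * √a)).intervalIntegrable β β'), ← Real.norm_eq_abs]
  refine (intervalIntegral.norm_integral_le_of_norm_le_const
    (C := B * (M + B ^ 2) / (a * √a)) fun x _ => ?_).trans_eq ?_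
  · rw [Real.norm_eq_abs]
    apply abs_im_cpow_one_half_sub_le (M := M) ha hB <;>
      simp only [sub_re, add_re, ofReal_re, mul_re, ofReal_im, I_re, I_im, sub_im, add_im, mul_im]
    · linarith [re_le_norm (w x), hM x]
    · simpa [abs_neg] using (abs_re_le_norm (w x)).trans (hM x)
    · simpa using hbB x
  · rw [abs_of_pos (sub_pos.2 h)]
    field_simp

theorem exists_unique_imSqrtIntegral_eq_zero (hw : Continuous w) (hwb : IsBounded (range w))
    (h : β < β') :
    ∃ a₀, 0 < a₀ ∧ ∃ C, 0 < C ∧ ∀ a, a₀ ≤ a →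
      (∃! b, imSqrtIntegral w β β' a b = 0) ∧
      ∀ b, imSqrtIntegral w β β' a b = 0 →
        |b - (∫ x in β..β', w x).im / (β' - β)| ≤ C / a := by
  obtain ⟨M, hM0, hM⟩ := hwb.exists_pos_norm_le
  replace hM (x : ℝ) : ‖w x‖ ≤ M := hM _ (mem_range_self x)
  set m := (∫ x in β..β', w x).im / (β' - β)
  set B := |m| + 1 + M
  set K := B * (M + B ^ 2)
  have hB : 1 ≤ B := by linarith [abs_nonneg m]
  have hK : 0 < K := by positivity
  refine ⟨2 * M + 2 * K + 3, by positivity, 2 * K + 1, by positivity, fun a ha => ?_⟩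
  have ha0 : 0 < a := by linarith
  have hMa : M < a := by linarith
  have hCa : (2 * K + 1) / a ≤ 1 := (div_le_one ha0).2 (by linarith)
  have hCa0 : 0 < (2 * K + 1) / a := by positivity
  set c := (β' - β) / (2 * √a)
  have hc : 0 < c / a := div_pos (div_pos (sub_pos.2 h) (by positivity)) ha0
  have hest (b : ℝ) (hb : |b - m| ≤ 1) :
      |imSqrtIntegral w β β' a b - c * (b - m)| ≤ c * (2 * K / a) := by
    refine abs_imSqrtIntegral_sub_le (a := a) hw hM (by linarith) (by linarith) hB (fun x => ?_) h
    linarith [abs_sub b (w x).im, abs_sub_abs_le_abs_sub b m, (abs_im_le_norm (w x)).trans (hM x)]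
  have hpos : 0 < imSqrtIntegral w β β' a (m + (2 * K + 1) / a) := by
    have := (abs_le.1 (hest _ (by rwa [add_sub_cancel_left, abs_of_pos hCa0]))).1
    linarith [show c * (m + (2 * K + 1) / a - m) - c * (2 * K / a) = c / a by ring]
  have hneg : imSqrtIntegral w β β' a (m - (2 * K + 1) / a) < 0 := by
    have := (abs_le.1 (hest _ (by rwa [sub_sub_cancel_left, abs_neg, abs_of_pos hCa0]))).2
    linarith [show c * (m - (2 * K + 1) / a - m) + c * (2 * K / a) = -(c / a) by ring]
  obtain ⟨b₀, hb₀, hroot⟩ := intermediate_value_Icc (by linarith)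
    (continuous_imSqrtIntegral hw hM hMa).continuousOn ⟨hneg.le, hpos.le⟩
  have hinj := (strictMono_imSqrtIntegral (β := β) (β' := β') hw hM hMa h).injective
  refine ⟨⟨b₀, hroot, fun b hb => hinj (hb.trans hroot.symm)⟩, fun b hb => ?_⟩
  rw [hinj (hb.trans hroot.symm), abs_le]
  constructor <;> linarith [hb₀.1, hb₀.2]

theorem stmt19_general (V : ℂ → ℂ) (U : Set ℂ)
    (hUV : ∀ x ∈ Set.Icc (-1:ℝ) 1, (x : ℂ) ∈ U)
    (hV : DifferentiableOn ℂ V U)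
    (β β' : ℝ) (hβ : -1 < β) (hββ' : β < β') (hβ' : β' < 1) (δ₁ : ℝ) :
    ∃ a₀ : ℝ, 0 < a₀ ∧ ∃ C : ℝ, 0 < C ∧
      ∀ a : ℝ, a₀ ≤ a →
        (∃! b : ℝ,
          (∫ x in β..β',
            ((a : ℂ) + (b : ℂ) * Complex.I - V (x : ℂ) - Complex.I * δ₁) ^ (1/2 : ℂ)).im
            = 0) ∧
        ∀ b : ℝ,
          (∫ x in β..β',
            ((a : ℂ) + (b : ℂ) * Complex.I - V (x : ℂ) - Complex.I * δ₁) ^ (1/2 : ℂ)).im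
            = 0 →
          |b - ((∫ x in β..β', V (x : ℂ)).im / (β' - β) + δ₁)| ≤ C / a := by
  have hVc : ContinuousOn (fun x : ℝ => V x) (uIcc β β') := by
    rw [uIcc_of_le hββ'.le]
    exact hV.continuousOn.comp continuous_ofReal.continuousOn fun x hx =>
      hUV x ⟨by linarith [hx.1], by linarith [hx.2]⟩
  set w := IccExtend hββ'.le fun x : Icc β β' => V x + I * δ₁
  have hcont : Continuous fun x : Icc β β' => V x + I * δ₁ :=
    (hVc.comp_continuous continuous_subtype_val fun x => by
      simp [uIcc_of_le hββ'.le]).add continuous_const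
  have hw (x : ℝ) (hx : x ∈ uIcc β β') : w x = V x + I * δ₁ :=
    IccExtend_of_mem _ _ (by rwa [uIcc_of_le hββ'.le] at hx)
  have hintegrand (a b : ℝ) :
      (∫ x in β..β', ((a : ℂ) + b * I - V x - I * δ₁) ^ (1 / 2 : ℂ)).im
        = imSqrtIntegral w β β' a b := by
    rw [imSqrtIntegral]
    congr 1
    exact intervalIntegral.integral_congr fun x hx => by simp only [hw x hx, sub_sub]
  have hmean : (∫ x in β..β', w x).im / (β' - β)
      = (∫ x in β..β', V x).im / (β' - β) + δ₁ := by
    rw [intervalIntegral.integral_congr hw, intervalIntegral.integral_add hVc.intervalIntegrable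
      intervalIntegrable_const, intervalIntegral.integral_const]
    field_simp [sub_ne_zero.2 hββ'.ne']
    simp
  obtain ⟨a₀, ha₀, C, hC, H⟩ :=
    exists_unique_imSqrtIntegral_eq_zero (hcont.Icc_extend' (h := hββ'.le))
    (by rw [IccExtend_range]; exact (isCompact_range hcont).isBounded) hββ'
  refine ⟨a₀, ha₀, C, hC, fun a ha => ?_⟩
  simpa only [hintegrand, ← hmean] using H a ha

/-- curve asymptotics in the pseudo-spectrum section, middle curve
for a potential with two jumps: for `a` large, the equation
`Im ∫_β^{β′} √((a+ib) − V(x) − iδ₁) dx = 0` has a unique real solution `b`, and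
`b = (Im ∫_β^{β′} V)/(β′−β) + δ₁ + O(1/a)`. -/
theorem stmt19 (V : ℂ → ℂ) (U : Set ℂ) (hU : IsOpen U)
    (hUV : ∀ x ∈ Set.Icc (-1:ℝ) 1, (x : ℂ) ∈ U)
    (hV : DifferentiableOn ℂ V U)
    (β β' : ℝ) (hβ : -1 < β) (hββ' : β < β') (hβ' : β' < 1) (δ₁ : ℝ) :
    ∃ a₀ : ℝ, 0 < a₀ ∧ ∃ C : ℝ, 0 < C ∧
      ∀ a : ℝ, a₀ ≤ a →
        (∃! b : ℝ,
          (∫ x in β..β',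
            ((a : ℂ) + (b : ℂ) * Complex.I - V (x : ℂ) - Complex.I * δ₁) ^ (1/2 : ℂ)).im
            = 0) ∧
        ∀ b : ℝ,
          (∫ x in β..β',
            ((a : ℂ) + (b : ℂ) * Complex.I - V (x : ℂ) - Complex.I * δ₁) ^ (1/2 : ℂ)).im
            = 0 →
          |b - ((∫ x in β..β', V (x : ℂ)).im / (β' - β) + δ₁)| ≤ C / a :=
  stmt19_general V U hUV hV β β' hβ hββ' hβ' δ₁
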